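/- In G = Z/2 * Z/3, if [x]^s = [y] as conjugacy classes (i.e., x^s is conjugate to y) for a positive integer s, and y is not conjugate to a, b, b^{-1}, or the identity, then s · ||[x]|| = ||[y]||, where ||[g]|| denotes the minimal word length in the conjugacy class of g. -/

import Mathlib

/-! A shortest word for an element of `G` alternates between `a` and `b^{±1}`, since `aa`, `bb⁻¹`,
`b⁻¹b`, `bb`, `b⁻¹b⁻¹` equal `1` or a single generator. Cyclically reducing it shows that every
element is conjugate to a generator or to an (ab)-word `a b^{ε₁} ⋯ a b^{εₜ}` (with `t = 0` for
`1`). Uniqueness of reduced words in a free product gives such a word length exactly `2t`. Its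
`s`-th power is an (ab)-word of length `2st`, so word length is homogeneous on it, and a
homogeneous element `w` minimises a subadditive length `ℓ` over its conjugacy class, because
`n ℓ(w) = ℓ(c⁻¹ hⁿ c) ≤ ℓ(c⁻¹) + ℓ(1) + n ℓ(h) + ℓ(c)` for all `n`. Hence `‖[w]‖ = 2t` and
`‖[wˢ]‖ = 2st`; the torsion classes are excluded by the hypotheses on `y`. -/

noncomputable section

/-- The free product `G = ℤ/2 * ℤ/3`. -/
abbrev G : Type := Monoid.Coprod (Multiplicative (ZMod 2)) (Multiplicative (ZMod 3))

/-- The generator of the `ℤ/2` factor. -/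
def a : G := Monoid.Coprod.inl (Multiplicative.ofAdd (1 : ZMod 2))

/-- The generator of the `ℤ/3` factor. -/
def b : G := Monoid.Coprod.inr (Multiplicative.ofAdd (1 : ZMod 3))

/-- Word length of `g ∈ G` with respect to the generating set `{a, b, b⁻¹}`. -/
def wordLength (g : G) : ℕ :=
  sInf {n | ∃ l : List G, l.length = n ∧ (∀ x ∈ l, x = a ∨ x = b ∨ x = b⁻¹) ∧ l.prod = g}

/-- `g` is an `(ab)`-word: `g = a b^{ε_1} a b^{ε_2} ⋯ a b^{ε_t}` with each `ε_i = ±1`. -/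
def IsAbWord (g : G) : Prop :=
  ∃ t : ℕ, 0 < t ∧ ∃ ε : Fin t → ℤ, (∀ i, ε i = 1 ∨ ε i = -1) ∧
    g = (List.ofFn fun i : Fin t => a * b ^ ε i).prod

/-- Minimal word length in the conjugacy class of `g`. -/
def classLength (g : G) : ℕ := sInf {n | ∃ h : G, IsConj g h ∧ wordLength h = n}

/-- Minimal word length over representatives of a conjugacy class. -/
def conjClassLength (c : ConjClasses G) : ℕ :=
  sInf {n | ∃ g : G, ConjClasses.mk g = c ∧ wordLength g = n}

namespace Monoid.CoprodI.Word

variable {ι : Type*} {M : ι → Type*} [∀ i, Monoid (M i)] [∀ i, DecidableEq (M i)]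

theorem length_rcons_le {i : ι} (p : Pair M i) :
    (rcons p).toList.length ≤ p.tail.toList.length + 1 := by
  unfold rcons; split <;> simp

theorem length_tail_le_length_rcons {i : ι} (p : Pair M i) :
    p.tail.toList.length ≤ (rcons p).toList.length := by
  unfold rcons; split <;> simp

variable [DecidableEq ι]

theorem length_of_smul_le {i : ι} (m : M i) (w : Word M) :
    (of m • w).toList.length ≤ w.toList.length + 1 := by
  have hw : rcons (equivPair i w) = w := (equivPair i).symm_apply_apply w
  rw [of_smul_def]
  refine (length_rcons_le _).trans (Nat.add_le_add_right ?_ 1)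
  calc (equivPair i w).tail.toList.length ≤ (rcons (equivPair i w)).toList.length :=
        length_tail_le_length_rcons _
    _ = w.toList.length := by rw [hw]

end Monoid.CoprodI.Word

open Monoid Multiplicative

theorem a_mul_a : a * a = 1 := by
  rw [a, ← map_mul]; exact map_one _

theorem b_pow_three : b ^ 3 = 1 := by
  rw [b, ← map_pow]; exact map_one _

theorem b_mul_b : b * b = b⁻¹ := by
  rw [eq_inv_iff_mul_eq_one, ← b_pow_three, pow_three, mul_assoc]

theorem b_inv_mul_b_inv : b⁻¹ * b⁻¹ = b := by
  rw [← mul_inv_rev, b_mul_b, inv_inv]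

theorem a_ne_one : a ≠ 1 := by
  rw [a, ← map_one Coprod.inl, Coprod.inl_injective.ne_iff]; decide

theorem b_ne_one : b ≠ 1 := by
  rw [b, ← map_one Coprod.inr, Coprod.inr_injective.ne_iff]; decide

theorem a_ne_b : a ≠ b := by
  intro h
  have := congrArg Coprod.fst h
  simp [a, b] at this

def IsGenerator (x : G) : Prop := x = a ∨ x = b ∨ x = b⁻¹

def IsBLetter (x : G) : Prop := x = b ∨ x = b⁻¹

def abWord (es : List G) : G := (es.map (a * ·)).prod

theorem a_pow_eq_one_or (n : ℕ) : a ^ n = 1 ∨ a ^ n = a := by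
  induction n with
  | zero => simp
  | succ n ih => rcases ih with h | h <;> simp [pow_succ, h, a_mul_a]

theorem b_pow_eq_one_or (n : ℕ) : b ^ n = 1 ∨ IsBLetter (b ^ n) := by
  induction n with
  | zero => simp
  | succ n ih => rcases ih with h | h | h <;> simp [IsBLetter, pow_succ, h, b_mul_b]

theorem IsGenerator.pow_eq_one_or {x : G} (hx : IsGenerator x) (n : ℕ) :
    x ^ n = 1 ∨ IsGenerator (x ^ n) := by
  rcases hx with rfl | rfl | rfl
  · rcases a_pow_eq_one_or n with h | h <;> simp [IsGenerator, h]
  · rcases b_pow_eq_one_or n with h | h | h <;> simp [IsGenerator, h]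
  · rcases b_pow_eq_one_or n with h | h | h <;> simp [IsGenerator, inv_pow, h]

theorem exists_word (g : G) : ∃ l : List G, (∀ x ∈ l, IsGenerator x) ∧ l.prod = g := by
  induction g using Coprod.induction_on with
  | inl m =>
    obtain rfl | rfl : m = 1 ∨ m = ofAdd 1 := by revert m; decide
    · exact ⟨[], by simp, by simp⟩
    · exact ⟨[a], by simp [IsGenerator], by simp [a]⟩
  | inr m =>
    obtain rfl | rfl | rfl : m = 1 ∨ m = ofAdd 1 ∨ m = ofAdd 1 * ofAdd 1 := by revert m; decide
    · exact ⟨[], by simp, by simp⟩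
    · exact ⟨[b], by simp [IsGenerator], by simp [b]⟩
    · exact ⟨[b, b], by simp [IsGenerator], by simp [b]⟩
  | mul g h hg hh =>
    obtain ⟨l₁, hl₁, rfl⟩ := hg
    obtain ⟨l₂, hl₂, rfl⟩ := hh
    exact ⟨l₁ ++ l₂, by grind, List.prod_append⟩

theorem wordLength_le {l : List G} (hl : ∀ x ∈ l, IsGenerator x) :
    wordLength l.prod ≤ l.length :=
  Nat.sInf_le ⟨l, rfl, hl, rfl⟩

theorem exists_shortest_word (g : G) :
    ∃ l : List G, (∀ x ∈ l, IsGenerator x) ∧ l.prod = g ∧ l.length = wordLength g := by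
  obtain ⟨l, hl, hprod⟩ := exists_word g
  obtain ⟨l', hlen, hl', hprod'⟩ := Nat.sInf_mem
    (s := {n | ∃ l : List G, l.length = n ∧ (∀ x ∈ l, IsGenerator x) ∧ l.prod = g})
    ⟨l.length, l, rfl, hl, hprod⟩
  exact ⟨l', hl', hprod', hlen⟩

theorem le_wordLength {g : G} {n : ℕ}
    (h : ∀ l : List G, (∀ x ∈ l, IsGenerator x) → l.prod = g → n ≤ l.length) :
    n ≤ wordLength g := by
  obtain ⟨l, hl, hprod, hlen⟩ := exists_shortest_word g
  exact hlen ▸ h l hl hprod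

theorem wordLength_mul_le (g h : G) : wordLength (g * h) ≤ wordLength g + wordLength h := by
  obtain ⟨l₁, hl₁, rfl, hlen₁⟩ := exists_shortest_word g
  obtain ⟨l₂, hl₂, rfl, hlen₂⟩ := exists_shortest_word h
  rw [← List.prod_append, ← hlen₁, ← hlen₂, ← List.length_append]
  exact wordLength_le (by grind)

/-- Sends the `ℤ/2` factor into the first copy of `G` and the `ℤ/3` factor into the second, so
that `a` and `b^{±1}` become one-letter reduced words in different factors. -/
def toCoprodI : G →* CoprodI fun _ : Bool => G :=
  Coprod.lift ((CoprodI.of (i := false)).comp Coprod.inl)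
    ((CoprodI.of (i := true)).comp Coprod.inr)

theorem toCoprodI_a : toCoprodI a = CoprodI.of (i := false) a := Coprod.lift_apply_inl _ _ _

theorem toCoprodI_b : toCoprodI b = CoprodI.of (i := true) b := Coprod.lift_apply_inr _ _ _

theorem toCoprodI_of_isBLetter {e : G} (he : IsBLetter e) :
    toCoprodI e = CoprodI.of (i := true) e := by
  rcases he with rfl | rfl
  · exact toCoprodI_b
  · rw [map_inv, toCoprodI_b, map_inv]

section ReducedLength

open scoped Classical

open CoprodI.Word

def reducedWord (g : G) : CoprodI.Word fun _ : Bool => G := toCoprodI g • empty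

def reducedLength (g : G) : ℕ := (reducedWord g).toList.length

theorem reducedWord_mul (g h : G) : reducedWord (g * h) = toCoprodI g • reducedWord h := by
  rw [reducedWord, reducedWord, map_mul, mul_smul]

theorem reducedLength_mul_le {x : G} (hx : IsGenerator x) (g : G) :
    reducedLength (x * g) ≤ reducedLength g + 1 := by
  rw [reducedLength, reducedLength, reducedWord_mul]
  rcases hx with rfl | hb
  · rw [toCoprodI_a]; exact length_of_smul_le _ _
  · rw [toCoprodI_of_isBLetter hb]; exact length_of_smul_le _ _

theorem reducedWord_mul_of_fstIdx_ne {i : Bool} {x : G}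
    (hx : toCoprodI x = CoprodI.of (i := i) x) (hx1 : x ≠ 1) {g : G}
    (hg : (reducedWord g).fstIdx ≠ some i) :
    (reducedWord (x * g)).fstIdx = some i ∧ reducedLength (x * g) = reducedLength g + 1 := by
  rw [reducedLength, reducedLength, reducedWord_mul, hx, ← cons_eq_smul (h1 := hg) (h2 := hx1)]
  simp

theorem reducedLength_prod_le {l : List G} (hl : ∀ x ∈ l, IsGenerator x) :
    reducedLength l.prod ≤ l.length := by
  induction l with
  | nil => simp [reducedLength, reducedWord]
  | cons x l ih =>
    rw [List.prod_cons, List.length_cons]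
    grind [reducedLength_mul_le]

theorem reducedLength_le_wordLength (g : G) : reducedLength g ≤ wordLength g :=
  le_wordLength fun _ hl hprod => hprod ▸ reducedLength_prod_le hl

theorem reducedLength_abWord {es : List G} (hes : ∀ e ∈ es, IsBLetter e) :
    reducedLength (abWord es) = 2 * es.length := by
  suffices h : (reducedWord (abWord es)).fstIdx ≠ some true ∧
      reducedLength (abWord es) = 2 * es.length from h.2
  induction es with
  | nil => simp [abWord, reducedLength, reducedWord, fstIdx]
  | cons e es ih =>
    obtain ⟨hfst, hlen⟩ := ih fun e' he' => hes e' (List.mem_cons_of_mem e he')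
    have he : IsBLetter e := hes e List.mem_cons_self
    have he1 : e ≠ 1 := by rcases he with rfl | rfl <;> simp [b_ne_one]
    obtain ⟨hfst', hlen'⟩ := reducedWord_mul_of_fstIdx_ne (toCoprodI_of_isBLetter he) he1 hfst
    obtain ⟨hfst'', hlen''⟩ :=
      reducedWord_mul_of_fstIdx_ne toCoprodI_a a_ne_one (hfst'.trans_ne (by simp))
    have hprod : abWord (e :: es) = a * (e * abWord es) := by
      rw [abWord, List.map_cons, List.prod_cons, ← abWord, mul_assoc]
    rw [hprod, hfst'', hlen'', hlen', hlen, List.length_cons]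
    exact ⟨by simp, by ring⟩

end ReducedLength

theorem abWord_append (es fs : List G) : abWord (es ++ fs) = abWord es * abWord fs := by
  simp [abWord]

theorem abWord_eq_prod_flatMap (es : List G) :
    abWord es = (es.flatMap fun e => [a, e]).prod := by
  induction es with
  | nil => rfl
  | cons e es ih => simp [abWord, ← ih, mul_assoc]

theorem abWord_pow (es : List G) (n : ℕ) :
    abWord es ^ n = abWord (List.replicate n es).flatten := by
  induction n with
  | zero => rfl
  | succ n ih => rw [pow_succ', ih, List.replicate_succ, List.flatten_cons, abWord_append]

theorem wordLength_abWord {es : List G} (hes : ∀ e ∈ es, IsBLetter e) :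
    wordLength (abWord es) = 2 * es.length := by
  refine le_antisymm ?_ (reducedLength_abWord hes ▸ reducedLength_le_wordLength _)
  rw [abWord_eq_prod_flatMap]
  refine (wordLength_le ?_).trans_eq (by simp [mul_comm])
  intro x hx
  obtain ⟨e, he, hx⟩ := List.mem_flatMap.mp hx
  obtain rfl | rfl : x = a ∨ x = e := by simpa using hx
  exacts [Or.inl rfl, Or.inr (hes _ he)]

theorem IsConj.le_of_subadditive {H : Type*} [Group H] {ℓ : H → ℕ}
    (hmul : ∀ x y, ℓ (x * y) ≤ ℓ x + ℓ y) {w h : H} (hpow : ∀ n : ℕ, ℓ (w ^ n) = n * ℓ w)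
    (hc : IsConj w h) : ℓ w ≤ ℓ h := by
  obtain ⟨c, hc⟩ := isConj_iff.mp hc
  have hpow_le (n : ℕ) : ℓ (h ^ n) ≤ ℓ 1 + n * ℓ h := by
    induction n with
    | zero => simp
    | succ n ih => grw [pow_succ, hmul, ih]; ring_nf; rfl
  have hbound (n : ℕ) : n * ℓ w ≤ ℓ c⁻¹ + (ℓ 1 + n * ℓ h) + ℓ c := by
    have hw : w ^ n = c⁻¹ * h ^ n * c := by rw [← hc, conj_pow]; group
    grw [← hpow, hw, hmul, hmul, hpow_le]
  by_contra! hlt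
  nlinarith [hbound (ℓ c⁻¹ + ℓ 1 + ℓ c + 1)]

theorem classLength_congr {g h : G} (hc : IsConj g h) : classLength g = classLength h := by
  unfold classLength
  congr 1
  ext n
  exact ⟨fun ⟨k, hk, hn⟩ => ⟨k, hc.symm.trans hk, hn⟩, fun ⟨k, hk, hn⟩ => ⟨k, hc.trans hk, hn⟩⟩

theorem classLength_abWord {es : List G} (hes : ∀ e ∈ es, IsBLetter e) :
    classLength (abWord es) = 2 * es.length := by
  have hpow (n : ℕ) : wordLength (abWord es ^ n) = n * wordLength (abWord es) := by
    rw [abWord_pow, wordLength_abWord hes,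
      wordLength_abWord fun e he => hes e (by grind [List.mem_flatten])]
    simp only [List.length_flatten, List.map_replicate, List.sum_replicate, smul_eq_mul]
    ring
  refine le_antisymm (Nat.sInf_le ⟨_, .refl _, wordLength_abWord hes⟩) ?_
  refine le_csInf ⟨_, _, .refl _, rfl⟩ ?_
  rintro _ ⟨h, hc, rfl⟩
  exact wordLength_abWord hes ▸ hc.le_of_subadditive wordLength_mul_le hpow

def Alternates (x y : G) : Prop := x = a ↔ y ≠ a

theorem exists_short_prod_of_not_alternates {x y : G} (hx : IsGenerator x) (hy : IsGenerator y)
    (hxy : ¬Alternates x y) :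
    ∃ l : List G, l.length ≤ 1 ∧ (∀ z ∈ l, IsGenerator z) ∧ l.prod = x * y := by
  have hb : b ≠ a := a_ne_b.symm
  have hb' : b⁻¹ ≠ a := fun h => hb (by rw [← inv_inv b, h, inv_eq_of_mul_eq_one_right a_mul_a])
  rcases hx with rfl | rfl | rfl <;> rcases hy with rfl | rfl | rfl <;>
    simp only [Alternates, hb, hb', ne_eq, not_true_eq_false, not_false_eq_true, iff_true,
      iff_false] at hxy
  · exact ⟨[], by simp, by simp, a_mul_a.symm⟩
  · exact ⟨[b⁻¹], by simp, by simp [IsGenerator], b_mul_b.symm⟩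
  · exact ⟨[], by simp, by simp, (mul_inv_cancel b).symm⟩
  · exact ⟨[], by simp, by simp, (inv_mul_cancel b).symm⟩
  · exact ⟨[b], by simp, by simp [IsGenerator], b_inv_mul_b_inv.symm⟩

theorem isChain_alternates_of_length_eq_wordLength {l : List G} (hl : ∀ x ∈ l, IsGenerator x)
    (hlen : l.length = wordLength l.prod) : l.IsChain Alternates := by
  rw [List.isChain_iff_forall_rel_of_append_cons_cons]
  rintro x y l₁ l₂ rfl
  by_contra hxy
  obtain ⟨l', hl'len, hl', hl'prod⟩ :=
    exists_short_prod_of_not_alternates (hl x (by simp)) (hl y (by simp)) hxy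
  have hprod : (l₁ ++ l' ++ l₂).prod = (l₁ ++ x :: y :: l₂).prod := by
    simp [hl'prod, mul_assoc]
  have := wordLength_le (l := l₁ ++ l' ++ l₂) (by grind)
  simp only [hprod, ← hlen, List.length_append, List.length_cons] at this
  omega

theorem prod_eq_abWord_of_isChain {l : List G} (hl : ∀ x ∈ l, IsGenerator x)
    (hchain : l.IsChain Alternates) (hhead : l.head? = some a) (hlast : l.getLast? ≠ some a) :
    ∃ es : List G, (∀ e ∈ es, IsBLetter e) ∧ l.prod = abWord es := by
  induction l using List.twoStepInduction with
  | nil => simp at hhead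
  | singleton x => simp_all
  | cons_cons x e rest ih _ =>
    obtain rfl : x = a := by simpa using hhead
    obtain ⟨hae, hchain'⟩ := List.isChain_cons_cons.mp hchain
    have he : IsBLetter e := (hl e (by simp)).resolve_left (by simpa [Alternates] using hae)
    cases rest with
    | nil => exact ⟨[e], by simpa using he, by simp [abWord]⟩
    | cons y rest =>
      have hy : y = a := by
        have := (List.isChain_cons_cons.mp hchain').1
        simp_all [Alternates]
      obtain ⟨es, hes, hprod⟩ := ih (by grind) hchain'.tail (by simp [hy]) (by simpa using hlast)
      refine ⟨e :: es, by grind, ?_⟩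
      rw [List.prod_cons, List.prod_cons, hprod]
      simp [abWord, mul_assoc]

theorem isConj_abWord_of_isChain {x z : G} {mid : List G}
    (hl : ∀ y ∈ x :: (mid ++ [z]), IsGenerator y) (hchain : (x :: (mid ++ [z])).IsChain Alternates)
    (hzx : Alternates z x) :
    ∃ es : List G, (∀ e ∈ es, IsBLetter e) ∧ IsConj (x :: (mid ++ [z])).prod (abWord es) := by
  by_cases hx : x = a
  · have hz : z ≠ a := by simpa [Alternates, hx] using hzx
    obtain ⟨es, hes, hprod⟩ := prod_eq_abWord_of_isChain hl hchain (by simp [hx])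
      (by rw [← List.cons_append, List.getLast?_concat]; simpa using hz)
    exact ⟨es, hes, hprod ▸ .refl _⟩
  · have hz : z = a := by simpa [Alternates, hx] using hzx
    rw [← List.cons_append, List.isChain_append] at hchain
    obtain ⟨hchain', -, hlast⟩ := hchain
    have hlast' : (x :: mid).getLast? ≠ some a := by
      intro h
      simpa [Alternates, hz] using hlast a h z (by simp)
    obtain ⟨es, hes, hprod⟩ := prod_eq_abWord_of_isChain (l := z :: x :: mid) (by grind)
      (List.isChain_cons_cons.mpr ⟨hzx, hchain'⟩) (by simp [hz]) (by simpa using hlast')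
    refine ⟨es, hes, hprod ▸ isConj_iff.mpr ⟨z, ?_⟩⟩
    simp only [List.prod_cons, List.prod_append, List.prod_nil]
    group

theorem exists_isConj_isGenerator_or_abWord (g : G) :
    ∃ h : G, IsConj g h ∧
      (IsGenerator h ∨ ∃ es : List G, (∀ e ∈ es, IsBLetter e) ∧ h = abWord es) := by
  induction hn : wordLength g using Nat.strong_induction_on generalizing g with
  | _ n ih =>
  obtain ⟨l, hl, rfl, hlen⟩ := exists_shortest_word g
  match l, hl, hlen with
  | [], _, _ => exact ⟨1, .refl _, .inr ⟨[], by simp, rfl⟩⟩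
  | [x], hl, _ => exact ⟨x, by rw [List.prod_singleton], .inl (hl x (by simp))⟩
  | x :: y :: rest, hl, hlen =>
    obtain ⟨mid, z, hmid⟩ : ∃ mid z, y :: rest = mid ++ [z] := by
      rcases (y :: rest).eq_nil_or_concat' with h | h
      exacts [absurd h (List.cons_ne_nil _ _), h]
    rw [hmid] at hl hlen hn ⊢
    -- either the word is cyclically alternating, or conjugation merges its two end letters
    by_cases hzx : Alternates z x
    · obtain ⟨es, hes, hc⟩ := isConj_abWord_of_isChain hl
        (isChain_alternates_of_length_eq_wordLength hl hlen) hzx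
      exact ⟨_, hc, .inr ⟨es, hes, rfl⟩⟩
    · obtain ⟨l', hl'len, hl', hl'prod⟩ :=
        exists_short_prod_of_not_alternates (hl z (by simp)) (hl x (by simp)) hzx
      have hc : IsConj (x :: (mid ++ [z])).prod (mid ++ l').prod :=
        isConj_iff.mpr ⟨x⁻¹, by simp [hl'prod, mul_assoc]⟩
      have hshort : wordLength (mid ++ l').prod < n := by
        have := wordLength_le (l := mid ++ l') (by grind)
        simp only [List.length_append, List.length_cons] at this hlen
        omega
      obtain ⟨h, hh, hcases⟩ := ih _ hshort _ rfl
      exact ⟨h, hc.trans hh, hcases⟩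

theorem class_length_of_power_general (x y : G) (s : ℕ)
    (hxy : IsConj (x ^ s) y) (hy1 : y ≠ 1)
    (ha : ¬IsConj y a) (hb : ¬IsConj y b) (hb' : ¬IsConj y b⁻¹) :
    s * classLength x = classLength y := by
  obtain ⟨h, hxh, hgen | ⟨es, hes, rfl⟩⟩ := exists_isConj_isGenerator_or_abWord x
  · have hy : IsConj y (h ^ s) := hxy.symm.trans (hxh.pow s)
    exfalso
    rcases hgen.pow_eq_one_or s with h1 | h1 | h1 | h1 <;> rw [h1] at hy
    exacts [hy1 (isConj_one_left.mp hy), ha hy, hb hy, hb' hy]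
  · have hy : IsConj (abWord (List.replicate s es).flatten) y :=
      abWord_pow es s ▸ (hxh.pow s).symm.trans hxy
    rw [classLength_congr hxh, ← classLength_congr hy, classLength_abWord hes,
      classLength_abWord fun e he => hes e (by grind [List.mem_flatten])]
    simp only [List.length_flatten, List.map_replicate, List.sum_replicate, smul_eq_mul]
    ring

/-- In `G = ℤ/2 * ℤ/3`, if `[x]^s = [y]` (i.e. `x^s` is conjugate
to `y`) for a positive integer `s`, and `y` is not conjugate to `a`, `b`,
`b⁻¹`, or the identity, then `s * ‖[x]‖ = ‖[y]‖`. -/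
theorem class_length_of_power (x y : G) (s : ℕ) (hs : 0 < s)
    (hxy : IsConj (x ^ s) y) (hy1 : y ≠ 1)
    (ha : ¬IsConj y a) (hb : ¬IsConj y b) (hb' : ¬IsConj y b⁻¹) :
    s * classLength x = classLength y :=
  class_length_of_power_general x y s hxy hy1 ha hb hb'
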